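/- Let A∈ℝ², μ = -|A|²/4, and let P:ℂ→ℂ be a complex polynomial. Define H:ℝ²→ℂ by H(x₁,x₂) = e^{-A·(x₁,x₂)/2} P(x₁+ix₂). Then -ΔH - A·∇H + μH = 0 on ℝ². -/

import Mathlib

open Complex


noncomputable def ellMap (A : EuclideanSpace ℝ (Fin 2)) : EuclideanSpace ℝ (Fin 2) →L[ℝ] ℂ :=
  (-(1:ℂ)/2) • (Complex.ofRealCLM.comp (innerSL ℝ A))

noncomputable def zMap : EuclideanSpace ℝ (Fin 2) →L[ℝ] ℂ :=
  Complex.ofRealCLM.comp (EuclideanSpace.proj (0 : Fin 2)) +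
    Complex.I • Complex.ofRealCLM.comp (EuclideanSpace.proj (1 : Fin 2))

lemma ellMap_apply (A y : EuclideanSpace ℝ (Fin 2)) :
    ellMap A y = -(((inner ℝ A y : ℝ) : ℂ)) / 2 := by
  simp [ellMap, smul_eq_mul]; ring

lemma zMap_apply (y : EuclideanSpace ℝ (Fin 2)) : zMap y = (y 0 : ℂ) + (y 1 : ℂ) * I := by
  simp [zMap, smul_eq_mul]; ring

lemma hasFDeriv_key (A : EuclideanSpace ℝ (Fin 2)) (Q : Polynomial ℂ)
    (y : EuclideanSpace ℝ (Fin 2)) :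
    HasFDerivAt (fun w => Complex.exp (ellMap A w) * Q.eval (zMap w))
      (Complex.exp (ellMap A y) • (Q.derivative.eval (zMap y) • (zMap : _ →L[ℝ] ℂ)) +
        Q.eval (zMap y) • (Complex.exp (ellMap A y) • (ellMap A))) y := by
  have h1 : HasFDerivAt (fun w => Complex.exp (ellMap A w))
      (Complex.exp (ellMap A y) • ellMap A) y :=
    (Complex.hasDerivAt_exp (ellMap A y)).comp_hasFDerivAt y (ellMap A).hasFDerivAt
  have h2 : HasFDerivAt (fun w => Q.eval (zMap w))
      (Q.derivative.eval (zMap y) • (zMap : _ →L[ℝ] ℂ)) y :=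
    (Q.hasDerivAt (zMap y)).comp_hasFDerivAt y (zMap).hasFDerivAt
  exact h1.mul h2

lemma fderiv_key (A : EuclideanSpace ℝ (Fin 2)) (Q : Polynomial ℂ)
    (y v : EuclideanSpace ℝ (Fin 2)) :
    fderiv ℝ (fun w => Complex.exp (ellMap A w) * Q.eval (zMap w)) y v =
      Complex.exp (ellMap A y) *
        (Q.eval (zMap y) * ellMap A v + Q.derivative.eval (zMap y) * zMap v) := by
  rw [(hasFDeriv_key A Q y).fderiv]
  simp [smul_eq_mul]
  ring

lemma inner_single (A : EuclideanSpace ℝ (Fin 2)) (i : Fin 2) :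
    (inner ℝ A (EuclideanSpace.single i (1:ℝ)) : ℝ) = A i := by
  simp [EuclideanSpace.inner_single_right]
/-- Directional derivative of `f` at `x` along `v`. -/
noncomputable def dirDeriv {d : ℕ} (v : EuclideanSpace ℝ (Fin d))
    (f : EuclideanSpace ℝ (Fin d) → ℂ) (x : EuclideanSpace ℝ (Fin d)) : ℂ :=
  fderiv ℝ f x v

/-- Laplacian of `f` at `x`, as the sum of the second derivatives along the
coordinate directions. -/
noncomputable def laplacianAt {d : ℕ} (f : EuclideanSpace ℝ (Fin d) → ℂ)
    (x : EuclideanSpace ℝ (Fin d)) : ℂ :=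
  ∑ i : Fin d, fderiv ℝ (fun y => fderiv ℝ f y (EuclideanSpace.single i 1)) x
    (EuclideanSpace.single i 1)

/-- with `μ = -|A|²/4` and `P` a complex polynomial, the function
`H(x) = e^{-A·x/2} P(x₁ + i x₂)` satisfies `-ΔH - A·∇H + μH = 0` on `ℝ²`. -/
theorem statement5 (A : EuclideanSpace ℝ (Fin 2)) (μ : ℝ) (hμ : μ = -‖A‖ ^ 2 / 4)
    (P : Polynomial ℂ) :
    ∀ x : EuclideanSpace ℝ (Fin 2),
      -laplacianAt (fun y : EuclideanSpace ℝ (Fin 2) =>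
          Complex.exp (-(((inner ℝ A y : ℝ) : ℂ)) / 2) * P.eval ((y 0 : ℂ) + (y 1 : ℂ) * Complex.I)) x
      - dirDeriv A (fun y : EuclideanSpace ℝ (Fin 2) =>
          Complex.exp (-(((inner ℝ A y : ℝ) : ℂ)) / 2) * P.eval ((y 0 : ℂ) + (y 1 : ℂ) * Complex.I)) x
      + (μ : ℂ) * (Complex.exp (-(((inner ℝ A x : ℝ) : ℂ)) / 2)
          * P.eval ((x 0 : ℂ) + (x 1 : ℂ) * Complex.I)) = 0 := by
  intro x
  simp only [laplacianAt, dirDeriv]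
  have hH : (fun y : EuclideanSpace ℝ (Fin 2) =>
      Complex.exp (-(((inner ℝ A y : ℝ) : ℂ)) / 2) * P.eval ((y 0 : ℂ) + (y 1 : ℂ) * Complex.I))
      = fun w => Complex.exp (ellMap A w) * P.eval (zMap w) := by
    funext w; rw [ellMap_apply, zMap_apply]
  rw [hH]
  -- second derivatives
  have hsecond : ∀ i : Fin 2,
      fderiv ℝ (fun y => fderiv ℝ (fun w => Complex.exp (ellMap A w) * P.eval (zMap w)) y
        (EuclideanSpace.single i 1)) x (EuclideanSpace.single i 1)
      = Complex.exp (ellMap A x) *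
          ((Polynomial.C (ellMap A (EuclideanSpace.single i 1)) * P +
            Polynomial.C (zMap (EuclideanSpace.single i 1)) * P.derivative).eval (zMap x) *
              ellMap A (EuclideanSpace.single i 1) +
           (Polynomial.C (ellMap A (EuclideanSpace.single i 1)) * P.derivative +
            Polynomial.C (zMap (EuclideanSpace.single i 1)) * P.derivative.derivative).eval (zMap x) *
              zMap (EuclideanSpace.single i 1)) := by
    intro i
    have hfun : (fun y => fderiv ℝ (fun w => Complex.exp (ellMap A w) * P.eval (zMap w)) y
        (EuclideanSpace.single i 1))
        = fun y => Complex.exp (ellMap A y) *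
            (Polynomial.C (ellMap A (EuclideanSpace.single i 1)) * P +
             Polynomial.C (zMap (EuclideanSpace.single i 1)) * P.derivative).eval (zMap y) := by
      funext y
      rw [fderiv_key]
      simp
      ring
    rw [hfun, fderiv_key]
    simp [Polynomial.derivative_C_mul]
  rw [Fin.sum_univ_two, hsecond 0, hsecond 1, fderiv_key]
  -- now evaluate the linear maps
  have hA : ((inner ℝ A A : ℝ) : ℂ) = (A 0 : ℂ)^2 + (A 1 : ℂ)^2 := by
    push_cast [PiLp.inner_apply, RCLike.inner_apply, Fin.sum_univ_two, starRingEnd_apply,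
      star_trivial]
    ring
  have hn : ((‖A‖:ℝ) : ℂ)^2 = (A 0 : ℂ)^2 + (A 1 : ℂ)^2 := by
    rw [← hA]; norm_cast; exact (real_inner_self_eq_norm_sq A).symm
  rw [ellMap_apply, ellMap_apply, ellMap_apply, ellMap_apply, zMap_apply, zMap_apply, zMap_apply,
    zMap_apply]
  rw [inner_single, inner_single, hA, hμ]

  simp [EuclideanSpace.single_apply]
  ring_nf
  simp [Complex.I_sq, hn]
  ring
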